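/- arXiv:2311.13211 — 3 statements merged into one kernel-verified Lean document; each statement's English description precedes it below -/
import Mathlib

section
/- Let n ≥ 1, Q = 2n+2, and let β ≤ 0 be such that Q - 2 + β > 0. Then there exists a constant C > 0, independent of λ, such that for every λ > 0 and every measurable set D ⊂ B_λ(0) = {ξ ∈ ℍⁿ : d(ξ) < λ}, one has ∫_D |z|^β dz dt ≤ C λ² |D|^{(Q-2+β)/Q}. -/
/-! Write `d = 2n`, so `Q = d + 2`. The gauge ball `B_λ(0)` lies in the cylinder
`S = B(0, λ) × (-λ², λ²)`, and Hölder's inequality with exponents `p = Q / (2 - β)` and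
`q = Q / (d + β)` gives `∫_D |z|^β ≤ (∫_S |z|^(βp))^(1/p) |D|^(1/q)`. In polar coordinates
`∫_S |z|^(βp) = c λ^(d + βp + 2)`, finite because `d + βp = 2(d + β)/(2 - β) > 0`; and
`d + βp + 2 = 2p`, so the first factor is `c^(1/p) λ²`. -/

open MeasureTheory ENNReal Real Set Metric

theorem setLIntegral_Ioo_rpow {a r : ℝ} (ha : -1 < a) (hr : 0 < r) :
    ∫⁻ x in Ioo 0 r, ENNReal.ofReal (x ^ a) = ENNReal.ofReal (r ^ (a + 1) / (a + 1)) := by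
  rw [← ofReal_integral_eq_lintegral_ofReal ((intervalIntegral.integrableOn_Ioo_rpow_iff hr).2 ha)
      ((ae_restrict_mem measurableSet_Ioo).mono fun x hx ↦ rpow_nonneg hx.1.le a),
    integral_Ioc_eq_integral_Ioo.symm, ← intervalIntegral.integral_of_le hr.le,
    integral_rpow (Or.inl ha), zero_rpow (by linarith), sub_zero]

local notation "dim" => Module.finrank ℝ

section Polar

variable {E : Type*} [NormedAddCommGroup E] [NormedSpace ℝ E] [MeasurableSpace E] [BorelSpace E]
  [FiniteDimensional ℝ E] (μ : Measure E) [μ.IsAddHaarMeasure]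

theorem lintegral_fun_norm_addHaar [Nontrivial E] {f : ℝ → ℝ≥0∞} (hf : Measurable f) :
    ∫⁻ x, f ‖x‖ ∂μ =
      μ.toSphere univ * ∫⁻ r in Ioi (0 : ℝ), ENNReal.ofReal (r ^ (dim E - 1)) * f r := by
  calc ∫⁻ x, f ‖x‖ ∂μ = ∫⁻ x : ({(0 : E)}ᶜ : Set E), f ‖x.1‖ ∂(μ.comap (↑)) := by
        rw [lintegral_subtype_comap (measurableSet_singleton _).compl fun x ↦ f ‖x‖,
          restrict_compl_singleton]
    _ = ∫⁻ x, f x.2 ∂(μ.toSphere.prod (.volumeIoiPow (dim E - 1))) := by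
        simpa using μ.measurePreserving_homeomorphUnitSphereProd.lintegral_comp
          (f := fun x : sphere (0 : E) 1 × Ioi (0 : ℝ) ↦ f x.2) (by fun_prop)
    _ = μ.toSphere univ * ∫⁻ r, f r ∂(.volumeIoiPow (dim E - 1)) := by
        rw [lintegral_prod _ (by fun_prop)]
        simp only [lintegral_const, mul_comm]
    _ = _ := by
        rw [Measure.volumeIoiPow, lintegral_withDensity_eq_lintegral_mul _ (by fun_prop)
          (by fun_prop)]
        exact congrArg _ (lintegral_subtype_comap measurableSet_Ioi
          fun r ↦ ENNReal.ofReal (r ^ (dim E - 1)) * f r)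

theorem setLIntegral_ball_rpow_norm [Nontrivial E] {s r : ℝ} (hs : -(dim E : ℝ) < s)
    (hr : 0 < r) :
    ∫⁻ x in ball (0 : E) r, ENNReal.ofReal (‖x‖ ^ s) ∂μ =
      μ.toSphere univ * ENNReal.ofReal (r ^ (dim E + s) / (dim E + s)) := by
  have hdim : 1 ≤ dim E := Module.finrank_pos
  have hind : ∀ x : E, (ball 0 r).indicator (fun x ↦ ENNReal.ofReal (‖x‖ ^ s)) x =
      (Iio r).indicator (fun t ↦ ENNReal.ofReal (t ^ s)) ‖x‖ := fun x ↦ by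
    by_cases h : ‖x‖ < r <;> simp [indicator, h]
  rw [← lintegral_indicator measurableSet_ball]
  simp only [hind]
  rw [lintegral_fun_norm_addHaar μ ((by fun_prop : Measurable fun t : ℝ ↦
    ENNReal.ofReal (t ^ s)).indicator measurableSet_Iio)]
  congr 1
  simp only [← indicator_mul_right _ fun t ↦ ENNReal.ofReal (t ^ (dim E - 1))]
  rw [lintegral_indicator measurableSet_Iio, Measure.restrict_restrict measurableSet_Iio,
    inter_comm, Ioi_inter_Iio, show (dim E : ℝ) + s = dim E - 1 + s + 1 by ring,
    ← setLIntegral_Ioo_rpow (by linarith) hr]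
  refine setLIntegral_congr_fun measurableSet_Ioo fun t ht ↦ ?_
  rw [← ENNReal.ofReal_mul (pow_nonneg ht.1.le _), ← Real.rpow_natCast, ← rpow_add ht.1]
  congr 2
  push_cast [Nat.cast_sub hdim]
  ring

end Polar

theorem setLIntegral_le_setLIntegral_rpow_mul_measure_rpow {α : Type*} [MeasurableSpace α]
    {μ : Measure α} {f : α → ℝ≥0∞} (hf : AEMeasurable f μ) {p q : ℝ} (hpq : p.HolderConjugate q)
    {D S : Set α} (hDS : D ⊆ S) :
    ∫⁻ x in D, f x ∂μ ≤ (∫⁻ x in S, f x ^ p ∂μ) ^ (1 / p) * μ D ^ (1 / q) := by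
  calc ∫⁻ x in D, f x ∂μ = ∫⁻ x in D, f x * 1 ∂μ := by simp only [mul_one]
    _ ≤ (∫⁻ x in D, f x ^ p ∂μ) ^ (1 / p) * (∫⁻ _ in D, 1 ^ q ∂μ) ^ (1 / q) :=
        ENNReal.lintegral_mul_le_Lp_mul_Lq _ hpq hf.restrict aemeasurable_const
    _ ≤ (∫⁻ x in S, f x ^ p ∂μ) ^ (1 / p) * μ D ^ (1 / q) := by
        rw [ENNReal.one_rpow, setLIntegral_one]
        gcongr
        exact one_div_nonneg.2 hpq.nonneg

theorem norm_lt_and_abs_lt_of_gauge_lt {E : Type*} [SeminormedAddCommGroup E] {z : E} {t r : ℝ}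
    (h : (‖z‖ ^ 4 + t ^ 2) ^ ((1 : ℝ) / 4) < r) : ‖z‖ < r ∧ |t| < r ^ 2 := by
  have hr : 0 < r := lt_of_le_of_lt (by positivity) h
  rw [one_div, rpow_inv_lt_iff_of_pos (by positivity) hr.le (by norm_num)] at h
  norm_cast at h
  constructor
  · exact lt_of_pow_lt_pow_left₀ 4 hr.le (by nlinarith [sq_nonneg t])
  · exact abs_lt_of_sq_lt_sq (by nlinarith [pow_nonneg (norm_nonneg z) 4]) (by positivity)

section Cylinder

variable {E : Type*} [NormedAddCommGroup E] [NormedSpace ℝ E] [MeasureSpace E] [BorelSpace E]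
  [FiniteDimensional ℝ E] [Nontrivial E] [(volume : Measure E).IsAddHaarMeasure]

theorem setLIntegral_ball_prod_Ioo_rpow_norm_fst {s r : ℝ} (hs : -(dim E : ℝ) < s) (hr : 0 < r) :
    ∫⁻ ξ in ball (0 : E) r ×ˢ Ioo (-r ^ 2) (r ^ 2), ENNReal.ofReal (‖ξ.1‖ ^ s) =
      ENNReal.ofReal (2 * ((volume : Measure E).toSphere univ).toReal / (dim E + s) *
        r ^ (dim E + s + 2)) := by
  rw [Measure.volume_eq_prod, setLIntegral_prod _ (by fun_prop)]
  simp only [lintegral_const, Measure.restrict_apply_univ, Real.volume_Ioo]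
  rw [lintegral_mul_const _ (by fun_prop), setLIntegral_ball_rpow_norm _ hs hr]
  conv_lhs => rw [← ENNReal.ofReal_toReal (measure_ne_top (volume : Measure E).toSphere univ)]
  have hds : 0 ≤ r ^ (dim E + s) / (dim E + s) := div_nonneg (rpow_nonneg hr.le _) (by linarith)
  rw [← ENNReal.ofReal_mul ENNReal.toReal_nonneg,
    ← ENNReal.ofReal_mul (mul_nonneg ENNReal.toReal_nonneg hds), rpow_add hr _ 2, Real.rpow_two]
  congr 1
  ring

theorem setLIntegral_rpow_norm_fst_le_of_subset_ball_prod_Ioo {β : ℝ} (hβ : β < 2)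
    (hdβ : 0 < (dim E : ℝ) + β) :
    ∃ C : ℝ, 0 < C ∧ ∀ r : ℝ, 0 < r → ∀ D ⊆ ball (0 : E) r ×ˢ Ioo (-r ^ 2) (r ^ 2),
      ∫⁻ ξ in D, ENNReal.ofReal (‖ξ.1‖ ^ β) ≤
        ENNReal.ofReal (C * r ^ 2) * volume D ^ ((dim E + β) / (dim E + 2)) := by
  set d : ℝ := (dim E : ℝ)
  set p : ℝ := (d + 2) / (2 - β) with hp_def
  have hd2 : d + 2 ≠ 0 := by positivity
  have h2β : 2 - β ≠ 0 := by linarith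
  have hp : 0 < p := div_pos (by positivity) (by linarith)
  have hpq : p.HolderConjugate ((d + 2) / (d + β)) := by
    rw [Real.holderConjugate_iff]
    refine ⟨(one_lt_div (by linarith)).2 (by linarith), ?_⟩
    rw [hp_def]
    field_simp
    ring
  have hdβp : d + β * p = 2 * (d + β) / (2 - β) := by
    rw [hp_def]
    field_simp
    ring
  have hds : 0 < d + β * p := by rw [hdβp]; exact div_pos (by linarith) (by linarith)
  set c : ℝ := 2 * ((volume : Measure E).toSphere univ).toReal / (d + β * p)
  have hc : 0 < c := div_pos (mul_pos two_pos (ENNReal.toReal_pos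
    (Measure.measure_univ_ne_zero.2 (Measure.toSphere_ne_zero _)) (measure_ne_top _ _))) hds
  refine ⟨c ^ (1 / p), by positivity, fun r hr D hD ↦ ?_⟩
  have hweight : ∀ ξ : E × ℝ, ENNReal.ofReal (‖ξ.1‖ ^ β) ^ p = ENNReal.ofReal (‖ξ.1‖ ^ (β * p)) :=
    fun ξ ↦ by rw [ENNReal.ofReal_rpow_of_nonneg (by positivity) hp.le, ← rpow_mul (norm_nonneg _)]
  have hexp : (d + β * p + 2) * (1 / p) = 2 := by
    rw [hdβp, hp_def]
    field_simp
    ring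
  calc ∫⁻ ξ in D, ENNReal.ofReal (‖ξ.1‖ ^ β)
      ≤ (∫⁻ ξ in ball (0 : E) r ×ˢ Ioo (-r ^ 2) (r ^ 2), ENNReal.ofReal (‖ξ.1‖ ^ β) ^ p) ^ (1 / p) *
          volume D ^ (1 / ((d + 2) / (d + β))) :=
        setLIntegral_le_setLIntegral_rpow_mul_measure_rpow (by fun_prop) hpq hD
    _ = ENNReal.ofReal (c ^ (1 / p) * r ^ 2) * volume D ^ ((d + β) / (d + 2)) := by
        simp only [hweight]
        rw [setLIntegral_ball_prod_Ioo_rpow_norm_fst (by linarith) hr,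
          ENNReal.ofReal_rpow_of_nonneg (by positivity) (by positivity),
          mul_rpow hc.le (by positivity), ← rpow_mul hr.le, hexp, Real.rpow_two,
          one_div_div (d + 2) (d + β)]

end Cylinder

theorem weighted_measure_estimate_in_gauge_ball (n : ℕ) (hn : 1 ≤ n) (β : ℝ)
    (hβ : β ≤ 0) (hQβ : 0 < 2 * (n : ℝ) + 2 - 2 + β) :
    ∃ C : ℝ, 0 < C ∧ ∀ lam : ℝ, 0 < lam →
      ∀ D : Set (EuclideanSpace ℝ (Fin (2 * n)) × ℝ), MeasurableSet D →
        D ⊆ {ξ | (‖ξ.1‖ ^ 4 + ξ.2 ^ 2) ^ ((1 : ℝ) / 4) < lam} →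
        ∫⁻ ξ in D, ENNReal.ofReal (‖ξ.1‖ ^ β) ≤
          ENNReal.ofReal (C * lam ^ 2) *
            volume D ^ ((2 * (n : ℝ) + 2 - 2 + β) / (2 * (n : ℝ) + 2)) := by
  have : NeZero (2 * n) := ⟨by omega⟩
  have hdim : (dim (EuclideanSpace ℝ (Fin (2 * n))) : ℝ) = 2 * n := by simp
  obtain ⟨C, hC, hest⟩ := setLIntegral_rpow_norm_fst_le_of_subset_ball_prod_Ioo
    (E := EuclideanSpace ℝ (Fin (2 * n))) (by linarith) (by rw [hdim]; linarith)
  refine ⟨C, hC, fun lam hlam D _ hD ↦ ?_⟩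
  convert hest lam hlam D fun ξ hξ ↦ ?_ using 3
  · rw [hdim]
    ring_nf
  · obtain ⟨hz, ht⟩ := norm_lt_and_abs_lt_of_gauge_lt (hD hξ)
    exact ⟨mem_ball_zero_iff.2 hz, abs_lt.1 ht⟩
end

section
/- Let p ≥ 1, s ∈ (0,1), α ∈ ℝ with (p-2)α ≥ 0, and let E ⊂ ℍⁿ be measurable with |E| < ∞. Fix ξ = (z,t) ∈ ℍⁿ. Then there exists a constant C = C(n,p,s,α) > 0 such that ∫_{E^C} d(ξ^{-1}∘ξ')^{-(Q+ps)} |z-z'|^{-(p-2)α} dξ' ≥ C |E|^{-(ps+(p-2)α)/Q}. -/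
noncomputable section

open MeasureTheory ENNReal Real

/-- The Heisenberg group `ℍⁿ`, identified with `ℝⁿ × ℝⁿ × ℝ` as a measure space. -/
abbrev Heis (n : ℕ) : Type :=
  (EuclideanSpace ℝ (Fin n) × EuclideanSpace ℝ (Fin n)) × ℝ

/-- The Euclidean distance `|z - z'|` between the horizontal components. -/
def zdist {n : ℕ} (ξ ξ' : Heis n) : ℝ :=
  (‖ξ.1.1 - ξ'.1.1‖ ^ 2 + ‖ξ.1.2 - ξ'.1.2‖ ^ 2) ^ ((1 : ℝ) / 2)

/-- The Korányi gauge distance `d(ξ⁻¹ ∘ ξ')` on the Heisenberg group. -/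
def kdist {n : ℕ} (ξ ξ' : Heis n) : ℝ :=
  ((‖ξ'.1.1 - ξ.1.1‖ ^ 2 + ‖ξ'.1.2 - ξ.1.2‖ ^ 2) ^ 2 +
    (ξ'.2 - ξ.2 - 2 * (inner ℝ ξ.1.2 ξ'.1.1 : ℝ) + 2 * (inner ℝ ξ.1.1 ξ'.1.2 : ℝ)) ^ 2) ^
      ((1 : ℝ) / 4)

set_option maxHeartbeats 1000000 in
theorem kernel_integral_lower_bound_on_complement (n : ℕ) (hn : 1 ≤ n) (p s α : ℝ)
    (hp : 1 ≤ p) (hs0 : 0 < s) (hs1 : s < 1) (hα : 0 ≤ (p - 2) * α) :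
    ∃ C : ℝ, 0 < C ∧ ∀ E : Set (Heis n), MeasurableSet E → volume E < ∞ →
      ∀ ξ : Heis n,
        ENNReal.ofReal C * volume E ^ (-(p * s + (p - 2) * α) / (2 * (n : ℝ) + 2)) ≤
          ∫⁻ ξ' in Eᶜ,
            ENNReal.ofReal (kdist ξ ξ' ^ (-(2 * (n : ℝ) + 2 + p * s)) *
              zdist ξ ξ' ^ (-((p - 2) * α))) := by
  classical
  haveI hnt : Nontrivial (EuclideanSpace ℝ (Fin n)) := by
    apply Module.nontrivial_of_finrank_pos (R := ℝ)
    rw [finrank_euclideanSpace_fin]; omega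
  set Q : ℝ := 2 * (n : ℝ) + 2 with hQdef
  have hQpos : 0 < Q := by positivity
  set β : ℝ := p * s + (p - 2) * α with hβdef
  have hps : 0 < p * s := mul_pos (lt_of_lt_of_le one_pos hp) hs0
  have hβ : 0 < β := by rw [hβdef]; linarith
  set c₀ : ℝ≥0∞ := volume (Metric.ball (0 : EuclideanSpace ℝ (Fin n)) 1) with hc₀def
  have hc₀pos : 0 < c₀ := Metric.measure_ball_pos _ _ one_pos
  have hc₀top : c₀ ≠ ∞ := measure_ball_lt_top.ne
  set v : ℝ := c₀.toReal with hvdef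
  have hvpos : 0 < v := ENNReal.toReal_pos hc₀pos.ne' hc₀top
  set D : ℝ := 2 * 4 ^ n / v ^ 2 with hDdef
  have hDpos : 0 < D := by positivity
  set c' : ℝ := v ^ 2 / (4 ^ n * 2) with hc'def
  have hc'pos : 0 < c' := by positivity
  refine ⟨D ^ (-β / Q) * c', mul_pos (Real.rpow_pos_of_pos hDpos _) hc'pos, ?_⟩
  intro E hE hEfin ξ
  -- the "center" function for the vertical slab
  set cf : EuclideanSpace ℝ (Fin n) × EuclideanSpace ℝ (Fin n) → ℝ :=
    fun a => ξ.2 + 2 * (inner ℝ ξ.1.2 a.1 : ℝ) - 2 * (inner ℝ ξ.1.1 a.2 : ℝ) with hcfdef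
  have hcfc : Continuous cf := by
    apply Continuous.sub
    · exact continuous_const.add
        (continuous_const.mul ((innerSL ℝ ξ.1.2).continuous.comp continuous_fst))
    · exact continuous_const.mul ((innerSL ℝ ξ.1.1).continuous.comp continuous_snd)
  -- the slanted box
  set S : ℝ → Set (Heis n) := fun r =>
    {ξ' | ξ'.1 ∈ Metric.ball ξ.1.1 (r / 2) ×ˢ Metric.ball ξ.1.2 (r / 2) ∧
      ξ'.2 ∈ Set.Icc (cf ξ'.1 - r ^ 2 / 2) (cf ξ'.1 + r ^ 2 / 2)} with hSdef
  have hSm : ∀ r : ℝ, MeasurableSet (S r) := by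
    intro r
    have h1 : MeasurableSet ((fun ξ' : Heis n => ξ'.1) ⁻¹'
        (Metric.ball ξ.1.1 (r / 2) ×ˢ Metric.ball ξ.1.2 (r / 2))) :=
      (measurableSet_ball.prod measurableSet_ball).preimage measurable_fst
    have h2 : MeasurableSet {ξ' : Heis n | cf ξ'.1 - r ^ 2 / 2 ≤ ξ'.2} :=
      measurableSet_le ((hcfc.measurable.comp measurable_fst).sub measurable_const)
        measurable_snd
    have h3 : MeasurableSet {ξ' : Heis n | ξ'.2 ≤ cf ξ'.1 + r ^ 2 / 2} :=
      measurableSet_le measurable_snd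
        ((hcfc.measurable.comp measurable_fst).add measurable_const)
    have : S r = ((fun ξ' : Heis n => ξ'.1) ⁻¹'
        (Metric.ball ξ.1.1 (r / 2) ×ˢ Metric.ball ξ.1.2 (r / 2))) ∩
        ({ξ' : Heis n | cf ξ'.1 - r ^ 2 / 2 ≤ ξ'.2} ∩
          {ξ' : Heis n | ξ'.2 ≤ cf ξ'.1 + r ^ 2 / 2}) := by
      ext ξ'
      simp only [hSdef, Set.mem_setOf_eq, Set.mem_Icc, Set.mem_inter_iff, Set.mem_preimage]
      try tauto
    rw [this]
    exact h1.inter (h2.inter h3)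
  -- volume of the slanted box
  have hSvol : ∀ r : ℝ, 0 ≤ r →
      volume (S r) = ENNReal.ofReal (r ^ (2 * n + 2) * v ^ 2 / 4 ^ n) := by
    intro r hr
    have hprod : volume (S r) = ∫⁻ a, volume (Prod.mk a ⁻¹' S r) := by
      rw [MeasureTheory.Measure.volume_eq_prod, Measure.prod_apply (hSm r)]
    have hslice : ∀ a, volume (Prod.mk a ⁻¹' S r) =
        (Metric.ball ξ.1.1 (r / 2) ×ˢ Metric.ball ξ.1.2 (r / 2)).indicator
          (fun _ => ENNReal.ofReal (r ^ 2)) a := by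
      intro a
      by_cases ha : a ∈ Metric.ball ξ.1.1 (r / 2) ×ˢ Metric.ball ξ.1.2 (r / 2)
      · have hpre : Prod.mk a ⁻¹' S r = Set.Icc (cf a - r ^ 2 / 2) (cf a + r ^ 2 / 2) := by
          ext t
          simp only [hSdef, Set.mem_preimage, Set.mem_setOf_eq, ha, true_and, Set.mem_Icc]
        rw [hpre, Real.volume_Icc, Set.indicator_of_mem ha]
        congr 1; ring
      · have hpre : Prod.mk a ⁻¹' S r = ∅ := by
          ext t
          simp only [hSdef, Set.mem_preimage, Set.mem_setOf_eq, ha, false_and,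
            Set.mem_empty_iff_false]
        rw [hpre, measure_empty, Set.indicator_of_notMem ha]
    rw [hprod]
    simp_rw [hslice]
    rw [lintegral_indicator (measurableSet_ball.prod measurableSet_ball) _,
      setLIntegral_const, MeasureTheory.Measure.volume_eq_prod, Measure.prod_prod,
      Measure.addHaar_ball _ _ (by linarith : (0:ℝ) ≤ r / 2),
      Measure.addHaar_ball _ _ (by linarith : (0:ℝ) ≤ r / 2),
      finrank_euclideanSpace_fin, ← hc₀def,
      show c₀ = ENNReal.ofReal v from (ENNReal.ofReal_toReal hc₀top).symm,
      ← ENNReal.ofReal_mul (by positivity : (0:ℝ) ≤ (r / 2) ^ n),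
      ← ENNReal.ofReal_mul (by positivity : (0:ℝ) ≤ (r / 2) ^ n * v),
      ← ENNReal.ofReal_mul (by positivity : (0:ℝ) ≤ r ^ 2)]
    congr 1
    have h4 : (4:ℝ) ^ n = 2 ^ n * 2 ^ n := by rw [← mul_pow]; norm_num
    rw [div_pow, h4]
    field_simp
    ring
  -- the null set where the horizontal component agrees with that of ξ
  have hNm : MeasurableSet {ξ' : Heis n | ξ'.1 = ξ.1} :=
    (measurableSet_singleton ξ.1).preimage measurable_fst
  have hNull : volume {ξ' : Heis n | ξ'.1 = ξ.1} = 0 := by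
    have hNeq : {ξ' : Heis n | ξ'.1 = ξ.1} =
        (({ξ.1.1} : Set (EuclideanSpace ℝ (Fin n))) ×ˢ
          ({ξ.1.2} : Set (EuclideanSpace ℝ (Fin n)))) ×ˢ (Set.univ : Set ℝ) := by
      ext ⟨⟨a, b⟩, t⟩
      simp [Prod.ext_iff, eq_comm]
    rw [hNeq, MeasureTheory.Measure.volume_eq_prod, Measure.prod_prod,
      MeasureTheory.Measure.volume_eq_prod, Measure.prod_prod, measure_singleton, measure_singleton]
    simp
  -- pointwise lower bound on the slanted box
  have hpt : ∀ r : ℝ, 0 < r → ∀ ξ' ∈ S r, ξ'.1 ≠ ξ.1 →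
      ENNReal.ofReal (r ^ (-(Q + p * s)) * r ^ (-((p - 2) * α))) ≤
        ENNReal.ofReal (kdist ξ ξ' ^ (-(Q + p * s)) * zdist ξ ξ' ^ (-((p - 2) * α))) := by
    intro r hr ξ' hS' hne
    obtain ⟨hball, hIcc⟩ := hS'
    rw [Set.mem_prod, Metric.mem_ball, Metric.mem_ball, dist_eq_norm, dist_eq_norm] at hball
    obtain ⟨hb1, hb2⟩ := hball
    have ha0 : (0:ℝ) ≤ ‖ξ'.1.1 - ξ.1.1‖ := norm_nonneg _
    have hb0 : (0:ℝ) ≤ ‖ξ'.1.2 - ξ.1.2‖ := norm_nonneg _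
    have hτ : |ξ'.2 - ξ.2 - 2 * (inner ℝ ξ.1.2 ξ'.1.1 : ℝ) + 2 * (inner ℝ ξ.1.1 ξ'.1.2 : ℝ)|
        ≤ r ^ 2 / 2 := by
      rw [Set.mem_Icc, hcfdef] at hIcc
      simp only at hIcc
      rw [abs_le]
      constructor <;> linarith [hIcc.1, hIcc.2]
    have hsum : ‖ξ'.1.1 - ξ.1.1‖ ^ 2 + ‖ξ'.1.2 - ξ.1.2‖ ^ 2 ≤ r ^ 2 / 2 := by nlinarith
    have hsum0 : 0 < ‖ξ'.1.1 - ξ.1.1‖ ^ 2 + ‖ξ'.1.2 - ξ.1.2‖ ^ 2 := by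
      have hne' : ξ'.1.1 - ξ.1.1 ≠ 0 ∨ ξ'.1.2 - ξ.1.2 ≠ 0 := by
        by_contra hcon
        push_neg at hcon
        exact hne (Prod.ext (sub_eq_zero.1 hcon.1) (sub_eq_zero.1 hcon.2))
      rcases hne' with h | h
      · have hpos := norm_pos_iff.2 h
        nlinarith
      · have hpos := norm_pos_iff.2 h
        nlinarith
    have hzr : zdist ξ ξ' ≤ r := by
      rw [zdist, norm_sub_rev ξ.1.1, norm_sub_rev ξ.1.2]
      calc (‖ξ'.1.1 - ξ.1.1‖ ^ 2 + ‖ξ'.1.2 - ξ.1.2‖ ^ 2) ^ ((1:ℝ)/2)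
          ≤ (r ^ 2) ^ ((1:ℝ)/2) :=
            Real.rpow_le_rpow (by positivity) (by linarith) (by norm_num)
        _ = r := by
            rw [← Real.rpow_natCast r 2, ← Real.rpow_mul hr.le]
            norm_num
    have hzpos : 0 < zdist ξ ξ' := by
      rw [zdist, norm_sub_rev ξ.1.1, norm_sub_rev ξ.1.2]
      exact Real.rpow_pos_of_pos hsum0 _
    have hX0 : 0 < (‖ξ'.1.1 - ξ.1.1‖ ^ 2 + ‖ξ'.1.2 - ξ.1.2‖ ^ 2) ^ 2 +
        (ξ'.2 - ξ.2 - 2 * (inner ℝ ξ.1.2 ξ'.1.1 : ℝ) + 2 * (inner ℝ ξ.1.1 ξ'.1.2 : ℝ)) ^ 2 :=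
      lt_of_lt_of_le (pow_pos hsum0 2) (le_add_of_nonneg_right (sq_nonneg _))
    have hkr : kdist ξ ξ' ≤ r := by
      rw [kdist]
      have hX : (‖ξ'.1.1 - ξ.1.1‖ ^ 2 + ‖ξ'.1.2 - ξ.1.2‖ ^ 2) ^ 2 +
          (ξ'.2 - ξ.2 - 2 * (inner ℝ ξ.1.2 ξ'.1.1 : ℝ) + 2 * (inner ℝ ξ.1.1 ξ'.1.2 : ℝ)) ^ 2
          ≤ r ^ 4 := by
        nlinarith [sq_abs (ξ'.2 - ξ.2 - 2 * (inner ℝ ξ.1.2 ξ'.1.1 : ℝ) +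
          2 * (inner ℝ ξ.1.1 ξ'.1.2 : ℝ)), abs_nonneg (ξ'.2 - ξ.2 -
          2 * (inner ℝ ξ.1.2 ξ'.1.1 : ℝ) + 2 * (inner ℝ ξ.1.1 ξ'.1.2 : ℝ))]
      calc ((‖ξ'.1.1 - ξ.1.1‖ ^ 2 + ‖ξ'.1.2 - ξ.1.2‖ ^ 2) ^ 2 +
            (ξ'.2 - ξ.2 - 2 * (inner ℝ ξ.1.2 ξ'.1.1 : ℝ) +
              2 * (inner ℝ ξ.1.1 ξ'.1.2 : ℝ)) ^ 2) ^ ((1:ℝ)/4)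
          ≤ (r ^ 4) ^ ((1:ℝ)/4) :=
            Real.rpow_le_rpow (by positivity) hX (by norm_num)
        _ = r := by
            rw [← Real.rpow_natCast r 4, ← Real.rpow_mul hr.le]
            norm_num
    have hkpos : 0 < kdist ξ ξ' := by
      rw [kdist]; exact Real.rpow_pos_of_pos hX0 _
    have he1 : -(Q + p * s) ≤ 0 := by linarith
    have he2 : -((p - 2) * α) ≤ 0 := neg_nonpos.2 hα
    exact ENNReal.ofReal_le_ofReal
      (mul_le_mul (Real.rpow_le_rpow_of_nonpos hkpos hkr he1)
        (Real.rpow_le_rpow_of_nonpos hzpos hzr he2)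
        (Real.rpow_nonneg hr.le _) (Real.rpow_nonneg hkpos.le _))
  -- the main bound for each admissible radius
  have hmain : ∀ r : ℝ, 0 < r →
      volume E + volume E ≤ ENNReal.ofReal (r ^ (2 * n + 2) * v ^ 2 / 4 ^ n) →
      ENNReal.ofReal (r ^ (-β) * c') ≤
        ∫⁻ ξ' in Eᶜ,
          ENNReal.ofReal (kdist ξ ξ' ^ (-(Q + p * s)) * zdist ξ ξ' ^ (-((p - 2) * α))) := by
    intro r hr hcond
    set k : ℝ := r ^ (2 * n + 2) * v ^ 2 / 4 ^ n with hkdef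
    have hkpos : 0 < k := by positivity
    set G : Set (Heis n) := (Eᶜ ∩ S r) \ {ξ' : Heis n | ξ'.1 = ξ.1} with hGdef
    have hGm : MeasurableSet G := (hE.compl.inter (hSm r)).diff hNm
    have hvolG : ENNReal.ofReal k / 2 ≤ volume G := by
      rw [hGdef, measure_diff_null hNull]
      have hS : volume (S r) = ENNReal.ofReal k := hSvol r hr.le
      have hE2 : volume E ≤ ENNReal.ofReal k / 2 := by
        rw [ENNReal.le_div_iff_mul_le (Or.inl two_ne_zero) (Or.inl ENNReal.ofNat_ne_top),
          mul_two]
        exact hcond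
      have hsplit : ENNReal.ofReal k ≤ volume E + volume (Eᶜ ∩ S r) := by
        have h := measure_le_inter_add_diff (volume : Measure (Heis n)) (S r) E
        rw [← hS]
        refine h.trans (add_le_add (measure_mono Set.inter_subset_right) ?_)
        rw [Set.diff_eq, Set.inter_comm]
      have hchain : ENNReal.ofReal k / 2 + volume E ≤ volume (Eᶜ ∩ S r) + volume E := by
        calc ENNReal.ofReal k / 2 + volume E
            ≤ ENNReal.ofReal k / 2 + ENNReal.ofReal k / 2 := add_le_add_right hE2 _
          _ = ENNReal.ofReal k := ENNReal.add_halves _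
          _ ≤ volume E + volume (Eᶜ ∩ S r) := hsplit
          _ = volume (Eᶜ ∩ S r) + volume E := add_comm _ _
      exact (ENNReal.add_le_add_iff_right hEfin.ne).1 hchain
    have hconst₀ : (0:ℝ) ≤ r ^ (-(Q + p * s)) * r ^ (-((p - 2) * α)) :=
      mul_nonneg (Real.rpow_nonneg hr.le _) (Real.rpow_nonneg hr.le _)
    calc ENNReal.ofReal (r ^ (-β) * c')
        = ENNReal.ofReal (r ^ (-(Q + p * s)) * r ^ (-((p - 2) * α))) *
            (ENNReal.ofReal k / 2) := by
          rw [← ENNReal.ofReal_ofNat 2, ← ENNReal.ofReal_div_of_pos (by norm_num),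
            ← ENNReal.ofReal_mul hconst₀]
          congr 1
          have h1 : r ^ (-(Q + p * s)) * r ^ (-((p - 2) * α)) = r ^ (-(Q + β)) := by
            rw [← Real.rpow_add hr]
            congr 1
            rw [hβdef]; ring
          have h2 : (r : ℝ) ^ (2 * n + 2) = r ^ (Q : ℝ) := by
            rw [← Real.rpow_natCast r (2 * n + 2)]
            congr 1
            rw [hQdef]; push_cast; ring
          have h3 : r ^ (-(Q + β)) * r ^ (Q : ℝ) = r ^ (-β) := by
            rw [← Real.rpow_add hr]; congr 1; ring
          rw [h1, hkdef, h2, hc'def, ← h3]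
          ring
      _ ≤ ENNReal.ofReal (r ^ (-(Q + p * s)) * r ^ (-((p - 2) * α))) * volume G :=
          mul_le_mul_right hvolG _
      _ = ∫⁻ _ in G, ENNReal.ofReal (r ^ (-(Q + p * s)) * r ^ (-((p - 2) * α))) :=
          (setLIntegral_const _ _).symm
      _ ≤ ∫⁻ ξ' in G,
            ENNReal.ofReal (kdist ξ ξ' ^ (-(Q + p * s)) * zdist ξ ξ' ^ (-((p - 2) * α))) := by
          refine setLIntegral_mono' hGm ?_
          intro x hx
          exact hpt r hr x hx.1.2 hx.2
      _ ≤ ∫⁻ ξ' in Eᶜ,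
            ENNReal.ofReal (kdist ξ ξ' ^ (-(Q + p * s)) * zdist ξ ξ' ^ (-((p - 2) * α))) :=
          lintegral_mono_set (Set.diff_subset.trans Set.inter_subset_left)
  -- conclude
  rcases eq_or_ne (volume E) 0 with h0 | h0
  · have htop : (∫⁻ ξ' in Eᶜ,
        ENNReal.ofReal (kdist ξ ξ' ^ (-(Q + p * s)) * zdist ξ ξ' ^ (-((p - 2) * α)))) = ⊤ := by
      apply ENNReal.eq_top_of_forall_nnreal_le
      intro x
      have hxnn : (0:ℝ) ≤ (x : ℝ) := x.coe_nonneg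
      set base : ℝ := ((x : ℝ) + 1) / c' with hbasedef
      have hbase : 0 < base := by positivity
      set r : ℝ := base ^ (-1 / β) with hrdef
      have hr : 0 < r := Real.rpow_pos_of_pos hbase _
      have hb := hmain r hr (by rw [h0]; simp)
      have hrb : r ^ (-β) = base := by
        rw [hrdef, ← Real.rpow_mul hbase.le,
          show (-1 / β) * (-β) = 1 by field_simp, Real.rpow_one]
      rw [hrb, hbasedef, div_mul_cancel₀ _ hc'pos.ne'] at hb
      calc (x : ℝ≥0∞) = ENNReal.ofReal (x : ℝ) := ENNReal.ofReal_coe_nnreal.symm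
        _ ≤ ENNReal.ofReal ((x : ℝ) + 1) := ENNReal.ofReal_le_ofReal (by linarith)
        _ ≤ _ := hb
    rw [htop]
    exact le_top
  · have hm : 0 < (volume E).toReal := ENNReal.toReal_pos h0 hEfin.ne
    set m : ℝ := (volume E).toReal with hmdef
    have hEm : volume E = ENNReal.ofReal m := (ENNReal.ofReal_toReal hEfin.ne).symm
    set base : ℝ := m * D with hbasedef
    have hbase : 0 < base := mul_pos hm hDpos
    set r : ℝ := base ^ (1 / Q) with hrdef
    have hr : 0 < r := Real.rpow_pos_of_pos hbase _
    have hrpow : r ^ (2 * n + 2) = base := by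
      rw [hrdef, ← Real.rpow_natCast (base ^ (1 / Q)) (2 * n + 2),
        ← Real.rpow_mul hbase.le,
        show (1 / Q) * ((2 * n + 2 : ℕ) : ℝ) = 1 by
          rw [hQdef]; push_cast; field_simp,
        Real.rpow_one]
    have hcond : volume E + volume E ≤
        ENNReal.ofReal (r ^ (2 * n + 2) * v ^ 2 / 4 ^ n) := by
      rw [hrpow, show base * v ^ 2 / 4 ^ n = 2 * m by
        rw [hbasedef, hDdef]; field_simp]
      rw [hEm, ← ENNReal.ofReal_add hm.le hm.le]
      exact ENNReal.ofReal_le_ofReal (by linarith)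
    have hb := hmain r hr hcond
    refine le_trans (le_of_eq ?_) hb
    have h5 : r ^ (-β) = base ^ (-β / Q) := by
      rw [hrdef, ← Real.rpow_mul hbase.le]
      congr 1
      ring
    have h6 : base ^ (-β / Q) = m ^ (-β / Q) * D ^ (-β / Q) := by
      rw [hbasedef]; exact Real.mul_rpow hm.le hDpos.le
    rw [hEm, ENNReal.ofReal_rpow_of_pos hm,
      ← ENNReal.ofReal_mul (mul_nonneg (Real.rpow_nonneg hDpos.le _) hc'pos.le)]
    congr 1
    rw [h5, h6]
    ring
end
end

section
/- Let n ≥ 1, Q = 2n+2, p ≥ 1, s' ∈ (0,1), α ∈ ℝ with (p-2)α ≥ 0 and (p-2)α < Q-2 and ps' + (p-2)α > 0. Then the three integrals J₁ = ∫_{|ζ|>1} ∫_{|μ|>1} (|ζ|⁴+μ²)^{-(Q+ps')/4} |ζ|^{-(p-2)α} dμ dζ, J₂ = ∫_{|ζ|>1} ∫_{|μ|<1} (same integrand) dμ dζ, and J₃ = ∫_{|ζ|<1} ∫_{|μ|>1} (same integrand) dμ dζ are each finite, where ζ ranges over ℝ^{2n} and μ over ℝ. -/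
open MeasureTheory ENNReal Real Set Metric

lemma lint_Ioi_rpow_lt_top {c : ℝ} (hc : c < -1) :
    ∫⁻ t in Set.Ioi (1:ℝ), ENNReal.ofReal (t ^ c) < ∞ :=
  (integrableOn_Ioi_rpow_of_lt hc one_pos).lintegral_lt_top

lemma lint_tail {E : Type*} [NormedAddCommGroup E] [NormedSpace ℝ E] [MeasurableSpace E]
    [BorelSpace E] [FiniteDimensional ℝ E] (μ : Measure E) [μ.IsAddHaarMeasure] {r : ℝ}
    (hr : (Module.finrank ℝ E : ℝ) < r) :
    ∫⁻ x in {x : E | 1 < ‖x‖}, ENNReal.ofReal (‖x‖ ^ (-r)) ∂μ < ∞ := by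
  have hr0 : 0 < r := lt_of_le_of_lt (Nat.cast_nonneg _) hr
  have hmono : ∀ x : E, x ∈ {x : E | 1 < ‖x‖} →
      ENNReal.ofReal (‖x‖ ^ (-r)) ≤ ENNReal.ofReal ((2:ℝ) ^ r * (1 + ‖x‖) ^ (-r)) := by
    intro x hx
    apply ENNReal.ofReal_le_ofReal
    have hx1 : (1:ℝ) < ‖x‖ := hx
    have hx0 : (0:ℝ) < ‖x‖ := lt_trans one_pos hx1
    have h2 : 1 + ‖x‖ ≤ 2 * ‖x‖ := by linarith
    have hkey : (2 * ‖x‖) ^ (-r) ≤ (1 + ‖x‖) ^ (-r) :=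
      Real.rpow_le_rpow_of_nonpos (by positivity) h2 (neg_nonpos.mpr hr0.le)
    calc ‖x‖ ^ (-r) = 2 ^ r * (2 * ‖x‖) ^ (-r) := by
          rw [Real.mul_rpow (by norm_num) hx0.le, ← mul_assoc, ← Real.rpow_add two_pos,
            add_neg_cancel, Real.rpow_zero, one_mul]
      _ ≤ 2 ^ r * (1 + ‖x‖) ^ (-r) := by
          exact mul_le_mul_of_nonneg_left hkey (by positivity)
  have hS : MeasurableSet {x : E | 1 < ‖x‖} :=
    measurableSet_lt measurable_const measurable_norm
  calc ∫⁻ x in {x : E | 1 < ‖x‖}, ENNReal.ofReal (‖x‖ ^ (-r)) ∂μ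
      ≤ ∫⁻ x in {x : E | 1 < ‖x‖}, ENNReal.ofReal ((2:ℝ) ^ r * (1 + ‖x‖) ^ (-r)) ∂μ := by
        refine lintegral_mono_ae ?_
        filter_upwards [ae_restrict_mem hS] with x hx using hmono x hx
    _ ≤ ∫⁻ x, ENNReal.ofReal ((2:ℝ) ^ r * (1 + ‖x‖) ^ (-r)) ∂μ :=
        setLIntegral_le_lintegral _ _
    _ = ENNReal.ofReal ((2:ℝ) ^ r) * ∫⁻ x, ENNReal.ofReal ((1 + ‖x‖) ^ (-r)) ∂μ := by
        simp_rw [ENNReal.ofReal_mul (by positivity : (0:ℝ) ≤ (2:ℝ) ^ r)]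
        exact lintegral_const_mul' _ _ ENNReal.ofReal_ne_top
    _ < ∞ := ENNReal.mul_lt_top ENNReal.ofReal_lt_top (finite_integral_one_add_norm hr)

lemma lint_ball {E : Type*} [NormedAddCommGroup E] [NormedSpace ℝ E] [MeasurableSpace E]
    [BorelSpace E] [FiniteDimensional ℝ E] (μ : Measure E) [μ.IsAddHaarMeasure]
    {β : ℝ} (hβ0 : 0 ≤ β) (hβ : β < (Module.finrank ℝ E : ℝ)) :
    ∫⁻ x in {x : E | ‖x‖ < 1}, ENNReal.ofReal (‖x‖ ^ (-β)) ∂μ < ∞ := by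
  have hSball : {x : E | ‖x‖ < 1} = Metric.ball (0:E) 1 := by
    ext x; simp [mem_ball_zero_iff]
  rcases eq_or_lt_of_le hβ0 with h0 | hβpos
  · simp only [← h0, neg_zero, Real.rpow_zero, ENNReal.ofReal_one, lintegral_one,
      Measure.restrict_apply_univ, hSball]
    exact measure_ball_lt_top
  · set d := Module.finrank ℝ E with hd
    have hmes : Measurable fun x : E => ‖x‖ ^ (-β) := by fun_prop
    rw [lintegral_eq_lintegral_meas_le (μ.restrict {x : E | ‖x‖ < 1})
      (Filter.Eventually.of_forall fun x => Real.rpow_nonneg (norm_nonneg x) _) hmes.aemeasurable]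
    have hsplit : Ioi (0:ℝ) = Ioc (0:ℝ) 1 ∪ Ioi (1:ℝ) := (Ioc_union_Ioi_eq_Ioi zero_le_one).symm
    rw [hsplit, lintegral_union measurableSet_Ioi Ioc_disjoint_Ioi_same]
    have hfin1 : ∫⁻ t in Ioc (0:ℝ) 1,
        (μ.restrict {x : E | ‖x‖ < 1}) {a | t ≤ ‖a‖ ^ (-β)} < ∞ := by
      calc ∫⁻ t in Ioc (0:ℝ) 1, (μ.restrict {x : E | ‖x‖ < 1}) {a | t ≤ ‖a‖ ^ (-β)}
          ≤ ∫⁻ _ in Ioc (0:ℝ) 1, μ (Metric.ball (0:E) 1) := by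
            refine lintegral_mono fun t => ?_
            calc (μ.restrict {x : E | ‖x‖ < 1}) {a | t ≤ ‖a‖ ^ (-β)}
                ≤ (μ.restrict {x : E | ‖x‖ < 1}) Set.univ := measure_mono (Set.subset_univ _)
              _ = μ {x : E | ‖x‖ < 1} := Measure.restrict_apply_univ _
              _ = μ (Metric.ball (0:E) 1) := by rw [hSball]
        _ = μ (Metric.ball (0:E) 1) * volume (Ioc (0:ℝ) 1) := setLIntegral_const _ _
        _ < ∞ := ENNReal.mul_lt_top measure_ball_lt_top (by simp)
    have hfin2 : ∫⁻ t in Ioi (1:ℝ),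
        (μ.restrict {x : E | ‖x‖ < 1}) {a | t ≤ ‖a‖ ^ (-β)} < ∞ := by
      have hbd : ∀ t ∈ Ioi (1:ℝ), (μ.restrict {x : E | ‖x‖ < 1}) {a | t ≤ ‖a‖ ^ (-β)}
          ≤ ENNReal.ofReal (t ^ (-(d / β))) * μ (Metric.ball (0:E) 1) := by
        intro t ht
        have ht0 : (0:ℝ) < t := lt_trans one_pos ht
        have hsub : {a : E | t ≤ ‖a‖ ^ (-β)} ⊆ Metric.closedBall (0:E) (t ^ (-β⁻¹)) := by
          intro a ha
          have ha' : t ≤ ‖a‖ ^ (-β) := ha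
          have hna : (0:ℝ) < ‖a‖ := by
            rcases (norm_nonneg a).lt_or_eq with h | h
            · exact h
            · exfalso
              rw [← h, Real.zero_rpow (by simpa using hβpos.ne')] at ha'
              exact absurd (ht0.trans_le ha') (lt_irrefl _)
          have hmul : (‖a‖ ^ (-β)) ^ (-β⁻¹) ≤ t ^ (-β⁻¹) :=
            Real.rpow_le_rpow_of_nonpos ht0 ha' (neg_nonpos.mpr (inv_nonneg.mpr hβ0))
          rw [← Real.rpow_mul (norm_nonneg a), neg_mul_neg,
            mul_inv_cancel₀ hβpos.ne', Real.rpow_one] at hmul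
          simpa [mem_closedBall_zero_iff] using hmul
        have hsub2 : (μ.restrict {x : E | ‖x‖ < 1}) {a | t ≤ ‖a‖ ^ (-β)}
            ≤ μ (Metric.closedBall (0:E) (t ^ (-β⁻¹))) :=
          le_trans (Measure.restrict_apply_le _ _) (measure_mono hsub)
        have hrad : (0:ℝ) ≤ t ^ (-β⁻¹) := Real.rpow_nonneg ht0.le _
        rw [Measure.addHaar_closedBall μ 0 hrad] at hsub2
        refine hsub2.trans (le_of_eq ?_)
        congr 1
        congr 1
        rw [← Real.rpow_natCast (t ^ (-β⁻¹)) d, ← Real.rpow_mul ht0.le]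
        congr 1
        field_simp
      calc ∫⁻ t in Ioi (1:ℝ), (μ.restrict {x : E | ‖x‖ < 1}) {a | t ≤ ‖a‖ ^ (-β)}
          ≤ ∫⁻ t in Ioi (1:ℝ),
              ENNReal.ofReal (t ^ (-(d / β))) * μ (Metric.ball (0:E) 1) := by
            refine lintegral_mono_ae ?_
            filter_upwards [ae_restrict_mem measurableSet_Ioi] with t ht using hbd t ht
        _ = (∫⁻ t in Ioi (1:ℝ), ENNReal.ofReal (t ^ (-(d / β)))) *
              μ (Metric.ball (0:E) 1) := lintegral_mul_const' _ _ measure_ball_lt_top.ne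
        _ < ∞ := by
            refine ENNReal.mul_lt_top (lint_Ioi_rpow_lt_top ?_) measure_ball_lt_top
            rw [neg_lt, neg_neg, lt_div_iff₀ hβpos, one_mul]
            exact hβ
    exact ENNReal.add_lt_top.mpr ⟨hfin1, hfin2⟩

lemma prod_bound_lt_top {E : Type*} [NormedAddCommGroup E]
    [MeasureSpace E] [SigmaFinite (volume : Measure E)]
    {S : Set E} {T : Set ℝ} (hS : MeasurableSet S) (hT : MeasurableSet T)
    {F : E × ℝ → ℝ≥0∞} {f : E → ℝ≥0∞} {g : ℝ → ℝ≥0∞}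
    (hf : AEMeasurable f (volume.restrict S)) (hg : AEMeasurable g (volume.restrict T))
    (hbound : ∀ z : E × ℝ, z ∈ S ×ˢ T → F z ≤ f z.1 * g z.2)
    (hf' : ∫⁻ x in S, f x < ∞) (hg' : ∫⁻ y in T, g y < ∞) :
    ∫⁻ z in S ×ˢ T, F z < ∞ := by
  calc ∫⁻ z in S ×ˢ T, F z ≤ ∫⁻ z in S ×ˢ T, f z.1 * g z.2 := by
        refine lintegral_mono_ae ?_
        filter_upwards [ae_restrict_mem (hS.prod hT)] with z hz using hbound z hz
    _ = ∫⁻ z, f z.1 * g z.2 ∂((volume.restrict S).prod (volume.restrict T)) := by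
        rw [Measure.volume_eq_prod, ← Measure.prod_restrict]
    _ = (∫⁻ x in S, f x) * (∫⁻ y in T, g y) := lintegral_prod_mul hf hg
    _ < ∞ := ENNReal.mul_lt_top hf' hg'

lemma rb1 {X Y K θ βv : ℝ} (hX : 1 < X) (hY : 1 < Y) (hK : 0 < K)
    (hθ0 : 0 ≤ θ) (hθ1 : θ ≤ 1) (hβ : 0 ≤ βv) :
    (X ^ 4 + Y ^ 2) ^ (-K / 4) * X ^ (-βv)
      ≤ X ^ (-(K * θ + βv)) * Y ^ (-(K * (1 - θ) / 2)) := by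
  have hX0 : (0:ℝ) < X := lt_trans one_pos hX
  have hY0 : (0:ℝ) < Y := lt_trans one_pos hY
  have hA : (0:ℝ) < X ^ (4:ℕ) := by positivity
  have hB : (0:ℝ) < Y ^ (2:ℕ) := by positivity
  have hgeom : (X ^ 4) ^ θ * (Y ^ 2) ^ (1 - θ) ≤ X ^ 4 + Y ^ 2 := by
    have h1 := Real.geom_mean_le_arith_mean2_weighted hθ0 (by linarith : (0:ℝ) ≤ 1 - θ)
      hA.le hB.le (by ring)
    have h2 : (0:ℝ) ≤ (1 - θ) * X ^ 4 := mul_nonneg (by linarith) hA.le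
    have h3 : (0:ℝ) ≤ θ * Y ^ 2 := mul_nonneg hθ0 hB.le
    linarith
  have hgpos : 0 < (X ^ 4) ^ θ * (Y ^ 2) ^ (1 - θ) :=
    mul_pos (Real.rpow_pos_of_pos hA θ) (Real.rpow_pos_of_pos hB _)
  have h1 : (X ^ 4 + Y ^ 2) ^ (-K / 4) ≤ ((X ^ 4) ^ θ * (Y ^ 2) ^ (1 - θ)) ^ (-K / 4) :=
    Real.rpow_le_rpow_of_nonpos hgpos hgeom (by linarith)
  have h2 : ((X ^ 4) ^ θ * (Y ^ 2) ^ (1 - θ)) ^ (-K / 4)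
      = X ^ (-(K * θ)) * Y ^ (-(K * (1 - θ) / 2)) := by
    rw [Real.mul_rpow (Real.rpow_nonneg hA.le _) (Real.rpow_nonneg hB.le _),
      ← Real.rpow_natCast X 4, ← Real.rpow_natCast Y 2,
      ← Real.rpow_mul hX0.le, ← Real.rpow_mul hY0.le,
      ← Real.rpow_mul hX0.le, ← Real.rpow_mul hY0.le]
    congr 1
    · congr 1; push_cast; ring
    · congr 1; push_cast; ring
  calc (X ^ 4 + Y ^ 2) ^ (-K / 4) * X ^ (-βv)
      ≤ (X ^ (-(K * θ)) * Y ^ (-(K * (1 - θ) / 2))) * X ^ (-βv) :=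
        mul_le_mul_of_nonneg_right (h1.trans_eq h2) (Real.rpow_nonneg hX0.le _)
    _ = X ^ (-(K * θ + βv)) * Y ^ (-(K * (1 - θ) / 2)) := by
        rw [mul_right_comm, ← Real.rpow_add hX0, neg_add]

lemma rb2 {X Y K βv : ℝ} (hX : 1 < X) (hK : 0 < K) (hβ : 0 ≤ βv) :
    (X ^ 4 + Y ^ 2) ^ (-K / 4) * X ^ (-βv) ≤ X ^ (-(K + βv)) := by
  have hX0 : (0:ℝ) < X := lt_trans one_pos hX
  have hA : (0:ℝ) < X ^ (4:ℕ) := by positivity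
  have h1 : (X ^ 4 + Y ^ 2) ^ (-K / 4) ≤ (X ^ 4) ^ (-K / 4) :=
    Real.rpow_le_rpow_of_nonpos hA (by nlinarith [sq_nonneg Y]) (by linarith)
  have h2 : (X ^ 4) ^ (-K / 4) = X ^ (-K) := by
    rw [← Real.rpow_natCast X 4, ← Real.rpow_mul hX0.le]
    congr 1; push_cast; ring
  calc (X ^ 4 + Y ^ 2) ^ (-K / 4) * X ^ (-βv)
      ≤ X ^ (-K) * X ^ (-βv) :=
        mul_le_mul_of_nonneg_right (h1.trans_eq h2) (Real.rpow_nonneg hX0.le _)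
    _ = X ^ (-(K + βv)) := by rw [← Real.rpow_add hX0, neg_add]

lemma rb3 {X Y K βv : ℝ} (hX0 : 0 ≤ X) (hY : 1 < Y) (hK : 0 < K) :
    (X ^ 4 + Y ^ 2) ^ (-K / 4) * X ^ (-βv) ≤ X ^ (-βv) * Y ^ (-(K / 2)) := by
  have hY0 : (0:ℝ) < Y := lt_trans one_pos hY
  have hB : (0:ℝ) < Y ^ (2:ℕ) := by positivity
  have h1 : (X ^ 4 + Y ^ 2) ^ (-K / 4) ≤ (Y ^ 2) ^ (-K / 4) :=
    Real.rpow_le_rpow_of_nonpos hB (by nlinarith [pow_nonneg hX0 4]) (by linarith)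
  have h2 : (Y ^ 2) ^ (-K / 4) = Y ^ (-(K / 2)) := by
    rw [← Real.rpow_natCast Y 2, ← Real.rpow_mul hY0.le]
    congr 1; push_cast; ring
  calc (X ^ 4 + Y ^ 2) ^ (-K / 4) * X ^ (-βv)
      ≤ Y ^ (-(K / 2)) * X ^ (-βv) :=
        mul_le_mul_of_nonneg_right (h1.trans_eq h2) (Real.rpow_nonneg hX0 _)
    _ = X ^ (-βv) * Y ^ (-(K / 2)) := mul_comm _ _

theorem three_region_kernel_integrals_finite (n : ℕ) (hn : 1 ≤ n) (p s' α : ℝ)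
    (hp : 1 ≤ p) (hs0 : 0 < s') (hs1 : s' < 1)
    (hα0 : 0 ≤ (p - 2) * α) (hα1 : (p - 2) * α < 2 * (n : ℝ) + 2 - 2)
    (hpos : 0 < p * s' + (p - 2) * α) :
    (∫⁻ ξ in {ξ : EuclideanSpace ℝ (Fin (2 * n)) × ℝ | 1 < ‖ξ.1‖ ∧ 1 < |ξ.2|},
      ENNReal.ofReal ((‖ξ.1‖ ^ 4 + ξ.2 ^ 2) ^ (-(2 * (n : ℝ) + 2 + p * s') / 4) *
        ‖ξ.1‖ ^ (-((p - 2) * α))) < ∞) ∧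
    (∫⁻ ξ in {ξ : EuclideanSpace ℝ (Fin (2 * n)) × ℝ | 1 < ‖ξ.1‖ ∧ |ξ.2| < 1},
      ENNReal.ofReal ((‖ξ.1‖ ^ 4 + ξ.2 ^ 2) ^ (-(2 * (n : ℝ) + 2 + p * s') / 4) *
        ‖ξ.1‖ ^ (-((p - 2) * α))) < ∞) ∧
    (∫⁻ ξ in {ξ : EuclideanSpace ℝ (Fin (2 * n)) × ℝ | ‖ξ.1‖ < 1 ∧ 1 < |ξ.2|},
      ENNReal.ofReal ((‖ξ.1‖ ^ 4 + ξ.2 ^ 2) ^ (-(2 * (n : ℝ) + 2 + p * s') / 4) *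
        ‖ξ.1‖ ^ (-((p - 2) * α))) < ∞) := by
  set β := (p - 2) * α with hβdef
  set K := 2 * (n : ℝ) + 2 + p * s' with hKdef
  have hn1 : (1:ℝ) ≤ (n:ℝ) := by exact_mod_cast hn
  have hps : 0 < p * s' := mul_pos (lt_of_lt_of_le one_pos hp) hs0
  have hK4 : 4 < K := by rw [hKdef]; linarith
  have hK0 : (0:ℝ) < K := by linarith
  have hβ0 : 0 ≤ β := hα0
  have hβ2n : β < 2 * (n:ℝ) := by linarith [hα1]
  clear_value β K
  obtain ⟨θ, hθ0, hθ1, hKθ⟩ : ∃ θ : ℝ, 0 ≤ θ ∧ θ ≤ 1 ∧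
      K * θ = (2 * (n:ℝ) + K - 2 - β) / 2 := by
    refine ⟨(2 * (n:ℝ) + K - 2 - β) / (2 * K), div_nonneg (by linarith) (by linarith), ?_, ?_⟩
    · rw [div_le_one (by linarith)]; linarith
    · field_simp
  have hA : 2 * (n:ℝ) < K * θ + β := by linarith
  have hB : 1 < K * (1 - θ) / 2 := by
    have h : K * (1 - θ) = K - K * θ := by ring
    linarith
  have hfr : (Module.finrank ℝ (EuclideanSpace ℝ (Fin (2 * n))) : ℝ) = 2 * (n:ℝ) := by
    rw [finrank_euclideanSpace_fin]; push_cast; ring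
  have hfr1 : (Module.finrank ℝ ℝ : ℝ) = 1 := by
    rw [Module.finrank_self]; norm_num
  have hS1 : MeasurableSet {x : EuclideanSpace ℝ (Fin (2 * n)) | 1 < ‖x‖} :=
    (isOpen_lt continuous_const continuous_norm).measurableSet
  have hS0 : MeasurableSet {x : EuclideanSpace ℝ (Fin (2 * n)) | ‖x‖ < 1} :=
    (isOpen_lt continuous_norm continuous_const).measurableSet
  have hT1 : MeasurableSet {y : ℝ | 1 < |y|} :=
    (isOpen_lt continuous_const continuous_abs).measurableSet
  have hT0 : MeasurableSet {y : ℝ | |y| < 1} :=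
    (isOpen_lt continuous_abs continuous_const).measurableSet
  have htailR : ∀ r : ℝ, 1 < r →
      ∫⁻ y in {y : ℝ | 1 < |y|}, ENNReal.ofReal (|y| ^ (-r)) < ∞ := by
    intro r hr
    have := lint_tail (E := ℝ) volume (r := r) (by rw [hfr1]; exact hr)
    simpa [Real.norm_eq_abs] using this
  refine ⟨?_, ?_, ?_⟩
  · -- region 1
    rw [show {ξ : EuclideanSpace ℝ (Fin (2 * n)) × ℝ | 1 < ‖ξ.1‖ ∧ 1 < |ξ.2|}
        = {x : EuclideanSpace ℝ (Fin (2 * n)) | 1 < ‖x‖} ×ˢ {y : ℝ | 1 < |y|} from rfl]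
    refine prod_bound_lt_top hS1 hT1
      (f := fun x => ENNReal.ofReal (‖x‖ ^ (-(K * θ + β))))
      (g := fun y => ENNReal.ofReal (|y| ^ (-(K * (1 - θ) / 2))))
      (by fun_prop) (by fun_prop) ?_ ?_ ?_
    · rintro z ⟨hz1, hz2⟩
      have h := rb1 (X := ‖z.1‖) (Y := |z.2|) hz1 hz2 hK0 hθ0 hθ1 hβ0
      rw [sq_abs] at h
      calc ENNReal.ofReal ((‖z.1‖ ^ 4 + z.2 ^ 2) ^ (-K / 4) * ‖z.1‖ ^ (-β))
          ≤ ENNReal.ofReal (‖z.1‖ ^ (-(K * θ + β)) * |z.2| ^ (-(K * (1 - θ) / 2))) :=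
            ENNReal.ofReal_le_ofReal h
        _ = _ := ENNReal.ofReal_mul (Real.rpow_nonneg (norm_nonneg _) _)
    · exact lint_tail volume (by rw [hfr]; exact hA)
    · exact htailR _ hB
  · -- region 2
    rw [show {ξ : EuclideanSpace ℝ (Fin (2 * n)) × ℝ | 1 < ‖ξ.1‖ ∧ |ξ.2| < 1}
        = {x : EuclideanSpace ℝ (Fin (2 * n)) | 1 < ‖x‖} ×ˢ {y : ℝ | |y| < 1} from rfl]
    refine prod_bound_lt_top hS1 hT0
      (f := fun x => ENNReal.ofReal (‖x‖ ^ (-(K + β))))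
      (g := fun _ => 1)
      (by fun_prop) (by fun_prop) ?_ ?_ ?_
    · rintro z ⟨hz1, _⟩
      have h := rb2 (X := ‖z.1‖) (Y := z.2) hz1 hK0 hβ0
      simpa using ENNReal.ofReal_le_ofReal h
    · exact lint_tail volume (by rw [hfr]; linarith)
    · rw [setLIntegral_one, show {y : ℝ | |y| < 1} = Set.Ioo (-1:ℝ) 1 from
        Set.ext fun y => by simpa using abs_lt, Real.volume_Ioo]
      exact ENNReal.ofReal_lt_top
  · -- region 3
    rw [show {ξ : EuclideanSpace ℝ (Fin (2 * n)) × ℝ | ‖ξ.1‖ < 1 ∧ 1 < |ξ.2|}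
        = {x : EuclideanSpace ℝ (Fin (2 * n)) | ‖x‖ < 1} ×ˢ {y : ℝ | 1 < |y|} from rfl]
    refine prod_bound_lt_top hS0 hT1
      (f := fun x => ENNReal.ofReal (‖x‖ ^ (-β)))
      (g := fun y => ENNReal.ofReal (|y| ^ (-(K / 2))))
      (by fun_prop) (by fun_prop) ?_ ?_ ?_
    · rintro z ⟨_, hz2⟩
      have h := rb3 (X := ‖z.1‖) (Y := |z.2|) (norm_nonneg _) hz2 hK0 (βv := β)
      rw [sq_abs] at h
      calc ENNReal.ofReal ((‖z.1‖ ^ 4 + z.2 ^ 2) ^ (-K / 4) * ‖z.1‖ ^ (-β))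
          ≤ ENNReal.ofReal (‖z.1‖ ^ (-β) * |z.2| ^ (-(K / 2))) :=
            ENNReal.ofReal_le_ofReal h
        _ = _ := ENNReal.ofReal_mul (Real.rpow_nonneg (norm_nonneg _) _)
    · exact lint_ball volume hβ0 (by rw [hfr]; linarith)
    · exact htailR _ (by linarith)
end
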